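/- arXiv:1505.05417 — 5 statements merged into one kernel-verified Lean document; each statement's English description precedes it below -/
import Mathlib

section
/- For every T > 0 there exists C_T < ∞ such that for all t ∈ [0,T] and all u, v ∈ ℝ with u ≠ v, |φ_t(2u) − φ_t(2v)|/(2|u−v|) ≤ C_T (1/(1+|u|) + 1/(1+|v|)) · 1/(1+|u−v|), where φ_t(w) = (1 − e^{itw})/w for w ≠ 0 and φ_t(0) = −it. -/
/-! Writing `φ_t(x) = -i ∫₀ᵗ e^{ixs} ds` gives `‖φ_t x‖ ≤ t` and the Lipschitz bound
`‖φ_t x - φ_t y‖ ≤ t² |x - y|`. The identity `x φ_t x = 1 - e^{itx}` gives `|x| ‖φ_t x‖ ≤ 2` and,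
through `x (φ_t x - φ_t y) = (x φ_t x - y φ_t y) + (y - x) φ_t y`, also
`|x| ‖φ_t x - φ_t y‖ ≤ 2t |x - y|`. When `|x| ≤ |y|` these four bounds add up to
`‖φ_t x - φ_t y‖ (1 + |x|) (1 + |x - y|) ≤ (t + 2)² |x - y|`. -/

open Complex

noncomputable def phi (t x : ℝ) : ℂ :=
  if x = 0 then -I * t else (1 - exp (I * t * x)) / x

lemma norm_exp_I_mul_sub_exp_I_mul_le (a b : ℝ) :
    ‖exp (I * a) - exp (I * b)‖ ≤ |a - b| := by
  have h : exp (I * a) - exp (I * b) = exp (I * b) * (exp (I * ↑(a - b)) - 1) := by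
    rw [mul_sub, ← exp_add]; push_cast; ring_nf
  rw [h, norm_mul, norm_exp_I_mul_ofReal, one_mul, ← Real.norm_eq_abs]
  exact Real.norm_exp_I_mul_ofReal_sub_one_le

lemma phi_eq_integral (t x : ℝ) : phi t x = ∫ s in 0..t, -I * exp (I * x * s) := by
  rw [intervalIntegral.integral_const_mul]
  by_cases hx : x = 0
  · simp [phi, hx]
  · have hIx : I * x ≠ 0 := mul_ne_zero I_ne_zero (ofReal_ne_zero.mpr hx)
    rw [integral_exp_mul_complex hIx, phi, if_neg hx]
    field_simp
    simp only [ofReal_zero, mul_zero, exp_zero]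
    ring_nf

lemma ofReal_mul_phi (t x : ℝ) : x * phi t x = 1 - exp (I * ↑(t * x)) := by
  by_cases hx : x = 0
  · simp [hx]
  · rw [phi, if_neg hx, mul_div_cancel₀ _ (ofReal_ne_zero.mpr hx)]
    push_cast; ring_nf

lemma norm_phi_le {t : ℝ} (ht : 0 ≤ t) (x : ℝ) : ‖phi t x‖ ≤ t := by
  rw [phi_eq_integral]
  refine (intervalIntegral.norm_integral_le_of_norm_le_const fun s _ => ?_).trans_eq
    (by rw [sub_zero, abs_of_nonneg ht, one_mul])
  rw [norm_mul, norm_neg, norm_I, one_mul, mul_assoc, ← ofReal_mul, norm_exp_I_mul_ofReal]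

lemma norm_phi_sub_phi_le {t : ℝ} (ht : 0 ≤ t) (x y : ℝ) :
    ‖phi t x - phi t y‖ ≤ t ^ 2 * |x - y| := by
  have hint : ∀ z : ℝ, IntervalIntegrable (fun s : ℝ => -I * exp (I * z * s))
      MeasureTheory.volume 0 t := fun z => by
    apply Continuous.intervalIntegrable; fun_prop
  rw [phi_eq_integral, phi_eq_integral, ← intervalIntegral.integral_sub (hint x) (hint y)]
  refine (intervalIntegral.norm_integral_le_of_norm_le_const (C := t * |x - y|)
    fun s hs => ?_).trans_eq (by rw [sub_zero, abs_of_nonneg ht]; ring)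
  rw [Set.uIoc_of_le ht] at hs
  rw [← mul_sub, norm_mul, norm_neg, norm_I, one_mul, mul_assoc, mul_assoc, ← ofReal_mul,
    ← ofReal_mul]
  calc ‖exp (I * ↑(x * s)) - exp (I * ↑(y * s))‖ ≤ |x * s - y * s| :=
        norm_exp_I_mul_sub_exp_I_mul_le _ _
    _ = |x - y| * s := by rw [← sub_mul, abs_mul, abs_of_pos hs.1]
    _ ≤ t * |x - y| := by nlinarith [abs_nonneg (x - y), hs.2]

lemma abs_mul_norm_phi_le (t x : ℝ) : |x| * ‖phi t x‖ ≤ 2 := by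
  rw [← Real.norm_eq_abs, ← norm_real, ← norm_mul, ofReal_mul_phi]
  refine (norm_sub_le _ _).trans ?_
  rw [norm_one, norm_exp_I_mul_ofReal]; norm_num

lemma abs_mul_norm_phi_sub_phi_le {t : ℝ} (ht : 0 ≤ t) (x y : ℝ) :
    |x| * ‖phi t x - phi t y‖ ≤ 2 * t * |x - y| := by
  have h : (x : ℂ) * (phi t x - phi t y) =
      (exp (I * ↑(t * y)) - exp (I * ↑(t * x))) + ↑(y - x) * phi t y := by
    rw [mul_sub, ofReal_mul_phi, ofReal_sub, sub_mul, ofReal_mul_phi]; ring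
  rw [← Real.norm_eq_abs, ← norm_real, ← norm_mul, h]
  calc _ ≤ ‖exp (I * ↑(t * y)) - exp (I * ↑(t * x))‖ + ‖(↑(y - x) : ℂ)‖ * ‖phi t y‖ :=
        (norm_add_le _ _).trans_eq (by rw [norm_mul])
    _ ≤ |t * y - t * x| + |x - y| * t := by
        rw [norm_real, Real.norm_eq_abs, abs_sub_comm y x]
        gcongr
        exacts [norm_exp_I_mul_sub_exp_I_mul_le _ _, norm_phi_le ht y]
    _ = 2 * t * |x - y| := by rw [← mul_sub, abs_mul, abs_of_nonneg ht, abs_sub_comm]; ring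

lemma norm_phi_sub_phi_mul_le {t x y : ℝ} (ht : 0 ≤ t) (hxy : |x| ≤ |y|) :
    ‖phi t x - phi t y‖ * ((1 + |x|) * (1 + |x - y|)) ≤ (t + 2) ^ 2 * |x - y| := by
  have hbdd : ‖phi t x - phi t y‖ ≤ 2 * t :=
    (norm_sub_le _ _).trans (by linarith [norm_phi_le ht x, norm_phi_le ht y])
  have hbdd' : |x| * ‖phi t x - phi t y‖ ≤ 4 := by
    have hy : |x| * ‖phi t y‖ ≤ 2 :=
      (mul_le_mul_of_nonneg_right hxy (norm_nonneg _)).trans (abs_mul_norm_phi_le t y)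
    nlinarith [norm_sub_le (phi t x) (phi t y), abs_mul_norm_phi_le t x, abs_nonneg x]
  nlinarith [norm_phi_sub_phi_le ht x y, abs_mul_norm_phi_sub_phi_le ht x y, abs_nonneg (x - y)]

lemma norm_phi_sub_phi_div_le {t x y : ℝ} (ht : 0 ≤ t) (hxy : x ≠ y) :
    ‖phi t x - phi t y‖ / |x - y| ≤
      (t + 2) ^ 2 * (1 / (1 + |x|) + 1 / (1 + |y|)) * (1 / (1 + |x - y|)) := by
  wlog h : |x| ≤ |y| generalizing x y
  · rw [norm_sub_rev, abs_sub_comm, add_comm (1 / _)]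
    exact this hxy.symm (le_of_not_ge h)
  have hd : 0 < |x - y| := abs_pos.mpr (sub_ne_zero.mpr hxy)
  calc ‖phi t x - phi t y‖ / |x - y|
      ≤ (t + 2) ^ 2 / ((1 + |x|) * (1 + |x - y|)) := by
        rw [div_le_div_iff₀ hd (by positivity)]
        linarith [norm_phi_sub_phi_mul_le ht h]
    _ = (t + 2) ^ 2 * (1 / (1 + |x|)) * (1 / (1 + |x - y|)) := by field_simp
    _ ≤ _ := by gcongr; exact le_add_of_nonneg_right (by positivity)

lemma ite_eq_phi_two_mul (t u : ℝ) :
    (if (2 * u) = 0 then -I * t else (1 - exp (I * t * (2 * u))) / (2 * u)) = phi t (2 * u) := by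
  simp only [phi]; push_cast; rfl

theorem stmt_7_general (T : ℝ) :
    ∃ C : ℝ, ∀ t ∈ Set.Icc (0 : ℝ) T, ∀ u v : ℝ, u ≠ v →
      ‖(if (2 * u) = 0 then -Complex.I * t
          else (1 - Complex.exp (Complex.I * t * (2 * u))) / (2 * u))
        - (if (2 * v) = 0 then -Complex.I * t
          else (1 - Complex.exp (Complex.I * t * (2 * v))) / (2 * v))‖ / (2 * |u - v|) ≤
      C * (1 / (1 + |u|) + 1 / (1 + |v|)) * (1 / (1 + |u - v|)) := by
  refine ⟨(T + 2) ^ 2, fun t ⟨ht0, htT⟩ u v huv => ?_⟩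
  rw [ite_eq_phi_two_mul, ite_eq_phi_two_mul, show 2 * |u - v| = |2 * u - 2 * v| by
    rw [← mul_sub, abs_mul, abs_two]]
  refine (norm_phi_sub_phi_div_le ht0 (by simpa using huv)).trans ?_
  rw [← mul_sub]
  simp only [abs_mul, abs_two]
  gcongr <;> linarith [abs_nonneg u, abs_nonneg v, abs_nonneg (u - v)]

theorem stmt_7 (T : ℝ) (hT : 0 < T) :
    ∃ C : ℝ, ∀ t ∈ Set.Icc (0 : ℝ) T, ∀ u v : ℝ, u ≠ v →
      ‖(if (2 * u) = 0 then -Complex.I * t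
          else (1 - Complex.exp (Complex.I * t * (2 * u))) / (2 * u))
        - (if (2 * v) = 0 then -Complex.I * t
          else (1 - Complex.exp (Complex.I * t * (2 * v))) / (2 * v))‖ / (2 * |u - v|) ≤
      C * (1 / (1 + |u|) + 1 / (1 + |v|)) * (1 / (1 + |u - v|)) :=
  stmt_7_general T
end

section
/- Let 0 < β < 2 and α > 0. There is a constant C (depending on β) such that for all a ≥ 1, ∬_{max(|u|,|v|) ≤ 2a^{1/α}} [1/(1+u²) + 1/(1+v²)] |u−v|^{β−1} du dv ≤ C a^{β/α}. -/
open MeasureTheory Set Real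

lemma aux_subEmb (u : ℝ) : MeasurableEmbedding (fun x : ℝ => u - x) := by
  have h : (fun x : ℝ => u - x) = (fun x : ℝ => u + x) ∘ (fun x : ℝ => -x) := by
    funext x; simp [sub_eq_add_neg]
  rw [h]
  exact ((Homeomorph.addLeft u).measurableEmbedding).comp
    (Homeomorph.neg ℝ).measurableEmbedding

lemma aux_lemA (β b : ℝ) (hβ0 : 0 < β) (hb : 0 < b) :
    ∫⁻ t in Icc (-b) b, ENNReal.ofReal (|t| ^ (β - 1)) ≤ ENNReal.ofReal (2 * (b ^ β / β)) := by
  have hr : (-1 : ℝ) < β - 1 := by linarith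
  have hIntOn : IntegrableOn (fun x : ℝ => |x| ^ (β - 1)) (Ioc 0 b) volume := by
    have h1 : IntegrableOn (fun x : ℝ => x ^ (β - 1)) (Ioc 0 b) volume := by
      rw [← intervalIntegrable_iff_integrableOn_Ioc_of_le hb.le]
      exact intervalIntegral.intervalIntegrable_rpow' hr
    exact h1.congr_fun (fun x hx => by rw [abs_of_pos hx.1]) measurableSet_Ioc
  have hval : ∫ x in Ioc 0 b, |x| ^ (β - 1) = b ^ β / β := by
    rw [setIntegral_congr_fun measurableSet_Ioc
      (fun x hx => by rw [abs_of_pos hx.1] : ∀ x ∈ Ioc (0:ℝ) b, |x| ^ (β-1) = x ^ (β-1)),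
      ← intervalIntegral.integral_of_le hb.le, integral_rpow (Or.inl hr)]
    have h2 : β - 1 + 1 = β := by ring
    rw [h2, Real.zero_rpow hβ0.ne']
    ring
  have key : ∫⁻ t in Ioc 0 b, ENNReal.ofReal (|t| ^ (β - 1)) = ENNReal.ofReal (b ^ β / β) := by
    rw [← ofReal_integral_eq_lintegral_ofReal hIntOn
      (Filter.Eventually.of_forall fun x => Real.rpow_nonneg (abs_nonneg x) _), hval]
  have hIcc : ∫⁻ t in Icc 0 b, ENNReal.ofReal (|t| ^ (β - 1)) = ENNReal.ofReal (b ^ β / β) := by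
    rw [← setLIntegral_congr Ioc_ae_eq_Icc]
    exact key
  have hneg : ∫⁻ t in Icc (-b) 0, ENNReal.ofReal (|t| ^ (β - 1))
      = ∫⁻ t in Icc 0 b, ENNReal.ofReal (|t| ^ (β - 1)) := by
    have h2 := (Measure.measurePreserving_neg (volume : Measure ℝ)).setLIntegral_comp_preimage_emb
      (Homeomorph.neg ℝ).measurableEmbedding
      (fun t => ENNReal.ofReal (|t| ^ (β - 1))) (Icc (-b) 0)
    simp only [abs_neg] at h2
    rw [← h2]
    congr 1
    simp [neg_preimage, neg_Icc]
  calc ∫⁻ t in Icc (-b) b, ENNReal.ofReal (|t| ^ (β - 1))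
      ≤ ∫⁻ t in Icc (-b) 0 ∪ Icc 0 b, ENNReal.ofReal (|t| ^ (β - 1)) := by
        apply lintegral_mono_set
        intro x hx
        rcases le_total x 0 with h | h
        · exact Or.inl ⟨hx.1, h⟩
        · exact Or.inr ⟨h, hx.2⟩
    _ ≤ (∫⁻ t in Icc (-b) 0, ENNReal.ofReal (|t| ^ (β - 1)))
        + ∫⁻ t in Icc 0 b, ENNReal.ofReal (|t| ^ (β - 1)) := lintegral_union_le _ _ _
    _ = ENNReal.ofReal (b ^ β / β) + ENNReal.ofReal (b ^ β / β) := by rw [hneg, hIcc]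
    _ = ENNReal.ofReal (2 * (b ^ β / β)) := by
        rw [← ENNReal.ofReal_add (by positivity) (by positivity)]; ring_nf

lemma aux_lemB (β R u : ℝ) (hβ0 : 0 < β) (hR : 0 < R) (hu : |u| ≤ R) :
    ∫⁻ v in Icc (-R) R, ENNReal.ofReal (|u - v| ^ (β - 1))
      ≤ ENNReal.ofReal (2 * ((2 * R) ^ β / β)) := by
  obtain ⟨hu1, hu2⟩ := abs_le.mp hu
  have h1 := (Measure.measurePreserving_sub_left (volume : Measure ℝ) u).setLIntegral_comp_emb
    (aux_subEmb u) (fun t => ENNReal.ofReal (|t| ^ (β - 1))) (Icc (-R) R)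
  have himg : (fun v : ℝ => u - v) '' Icc (-R) R = Icc (u - R) (u + R) := by
    rw [Set.image_const_sub_Icc]
    norm_num
  rw [himg] at h1
  calc ∫⁻ v in Icc (-R) R, ENNReal.ofReal (|u - v| ^ (β - 1))
      = ∫⁻ t in Icc (u - R) (u + R), ENNReal.ofReal (|t| ^ (β - 1)) := h1
    _ ≤ ∫⁻ t in Icc (-(2 * R)) (2 * R), ENNReal.ofReal (|t| ^ (β - 1)) := by
        apply lintegral_mono_set
        apply Icc_subset_Icc <;> linarith
    _ ≤ ENNReal.ofReal (2 * ((2 * R) ^ β / β)) := aux_lemA β (2 * R) hβ0 (by linarith)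

lemma aux_lemPi (s : Set ℝ) : ∫⁻ u in s, ENNReal.ofReal (1 / (1 + u ^ 2)) ≤ ENNReal.ofReal π := by
  simp_rw [one_div]
  calc ∫⁻ u in s, ENNReal.ofReal ((1 + u ^ 2)⁻¹)
      ≤ ∫⁻ u, ENNReal.ofReal ((1 + u ^ 2)⁻¹) := setLIntegral_le_lintegral s _
    _ = ENNReal.ofReal (∫ u : ℝ, (1 + u ^ 2)⁻¹) :=
        (ofReal_integral_eq_lintegral_ofReal integrable_inv_one_add_sq
          (Filter.Eventually.of_forall fun x => by positivity)).symm
    _ = ENNReal.ofReal π := by rw [integral_univ_inv_one_add_sq]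

theorem stmt_8 (β α : ℝ) (hβ0 : 0 < β) (hβ2 : β < 2) (hα : 0 < α) :
    ∃ C : ℝ, ∀ a ≥ (1 : ℝ),
      ∫ p in {p : ℝ × ℝ | |p.1| ≤ 2 * a ^ (1 / α) ∧ |p.2| ≤ 2 * a ^ (1 / α)},
        (1 / (1 + p.1 ^ 2) + 1 / (1 + p.2 ^ 2)) * |p.1 - p.2| ^ (β - 1) ≤
      C * a ^ (β / α) := by
  refine ⟨4 * π * 4 ^ β / β, fun a ha => ?_⟩
  have ha0 : (0:ℝ) < a := lt_of_lt_of_le one_pos ha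
  set R : ℝ := 2 * a ^ (1 / α) with hRdef
  have hA : (0:ℝ) < a ^ (1/α) := Real.rpow_pos_of_pos ha0 _
  have hR : 0 < R := by positivity
  have hπ := Real.pi_pos
  have hrhs : 2 * (π * (2 * ((2 * R) ^ β / β))) = 4 * π * 4 ^ β / β * a ^ (β / α) := by
    have h2R : 2 * R = 4 * a ^ (1/α) := by rw [hRdef]; ring
    have h3 : (a ^ (1/α)) ^ β = a ^ (β / α) := by
      rw [← Real.rpow_mul ha0.le, one_div_mul_eq_div]
    rw [h2R, Real.mul_rpow (by norm_num) hA.le, h3]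
    ring
  have hC0 : 0 ≤ 4 * π * 4 ^ β / β * a ^ (β / α) := by positivity
  have hset : {p : ℝ × ℝ | |p.1| ≤ R ∧ |p.2| ≤ R} = Icc (-R) R ×ˢ Icc (-R) R := by
    ext p
    simp only [Set.mem_setOf_eq, Set.mem_prod, mem_Icc, abs_le]
  set K : ENNReal := ENNReal.ofReal (2 * ((2 * R) ^ β / β)) with hK
  rw [integral_eq_lintegral_of_nonneg_ae
    (Filter.Eventually.of_forall fun p => by positivity)
    (Measurable.aestronglyMeasurable (by fun_prop))]
  apply ENNReal.toReal_le_of_le_ofReal hC0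
  rw [hset]
  have hsplit : ∀ p : ℝ × ℝ,
      ENNReal.ofReal ((1 / (1 + p.1 ^ 2) + 1 / (1 + p.2 ^ 2)) * |p.1 - p.2| ^ (β - 1))
      = ENNReal.ofReal (1 / (1 + p.1 ^ 2)) * ENNReal.ofReal (|p.1 - p.2| ^ (β - 1))
        + ENNReal.ofReal (1 / (1 + p.2 ^ 2)) * ENNReal.ofReal (|p.1 - p.2| ^ (β - 1)) := by
    intro p
    rw [add_mul, ENNReal.ofReal_add (by positivity) (by positivity),
      ENNReal.ofReal_mul (by positivity), ENNReal.ofReal_mul (by positivity)]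
  have T1 : ∫⁻ p in Icc (-R) R ×ˢ Icc (-R) R,
      ENNReal.ofReal (1 / (1 + p.1 ^ 2)) * ENNReal.ofReal (|p.1 - p.2| ^ (β - 1))
      ≤ ENNReal.ofReal π * K := by
    rw [Measure.volume_eq_prod, ← Measure.prod_restrict, lintegral_prod _ (by fun_prop)]
    have inner_eq : ∀ x : ℝ,
        (∫⁻ y in Icc (-R) R,
          ENNReal.ofReal (1 / (1 + x ^ 2)) * ENNReal.ofReal (|x - y| ^ (β - 1)))
        = ENNReal.ofReal (1 / (1 + x ^ 2))
          * ∫⁻ y in Icc (-R) R, ENNReal.ofReal (|x - y| ^ (β - 1)) :=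
      fun x => lintegral_const_mul _ (by fun_prop)
    simp only [inner_eq]
    calc ∫⁻ x in Icc (-R) R, ENNReal.ofReal (1 / (1 + x ^ 2))
          * ∫⁻ y in Icc (-R) R, ENNReal.ofReal (|x - y| ^ (β - 1))
        ≤ ∫⁻ x in Icc (-R) R, ENNReal.ofReal (1 / (1 + x ^ 2)) * K := by
          apply setLIntegral_mono (by fun_prop)
          intro x hx
          exact mul_le_mul_right (aux_lemB β R x hβ0 hR (abs_le.mpr ⟨hx.1, hx.2⟩)) _
      _ = (∫⁻ x in Icc (-R) R, ENNReal.ofReal (1 / (1 + x ^ 2))) * K :=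
          lintegral_mul_const _ (by fun_prop)
      _ ≤ ENNReal.ofReal π * K := mul_le_mul_left (aux_lemPi _) _
  have T2 : ∫⁻ p in Icc (-R) R ×ˢ Icc (-R) R,
      ENNReal.ofReal (1 / (1 + p.2 ^ 2)) * ENNReal.ofReal (|p.1 - p.2| ^ (β - 1))
      ≤ ENNReal.ofReal π * K := by
    rw [Measure.volume_eq_prod, ← Measure.prod_restrict, lintegral_prod_symm _ (by fun_prop)]
    have inner_eq : ∀ y : ℝ,
        (∫⁻ x in Icc (-R) R,
          ENNReal.ofReal (1 / (1 + y ^ 2)) * ENNReal.ofReal (|x - y| ^ (β - 1)))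
        = ENNReal.ofReal (1 / (1 + y ^ 2))
          * ∫⁻ x in Icc (-R) R, ENNReal.ofReal (|y - x| ^ (β - 1)) := by
      intro y
      rw [lintegral_const_mul _ (by fun_prop)]
      congr 1
      apply lintegral_congr
      intro x
      rw [abs_sub_comm]
    simp only [inner_eq]
    calc ∫⁻ y in Icc (-R) R, ENNReal.ofReal (1 / (1 + y ^ 2))
          * ∫⁻ x in Icc (-R) R, ENNReal.ofReal (|y - x| ^ (β - 1))
        ≤ ∫⁻ y in Icc (-R) R, ENNReal.ofReal (1 / (1 + y ^ 2)) * K := by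
          apply setLIntegral_mono (by fun_prop)
          intro y hy
          exact mul_le_mul_right (aux_lemB β R y hβ0 hR (abs_le.mpr ⟨hy.1, hy.2⟩)) _
      _ = (∫⁻ y in Icc (-R) R, ENNReal.ofReal (1 / (1 + y ^ 2))) * K :=
          lintegral_mul_const _ (by fun_prop)
      _ ≤ ENNReal.ofReal π * K := mul_le_mul_left (aux_lemPi _) _
  calc ∫⁻ p in Icc (-R) R ×ˢ Icc (-R) R,
        ENNReal.ofReal ((1 / (1 + p.1 ^ 2) + 1 / (1 + p.2 ^ 2)) * |p.1 - p.2| ^ (β - 1))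
      = (∫⁻ p in Icc (-R) R ×ˢ Icc (-R) R,
          ENNReal.ofReal (1 / (1 + p.1 ^ 2)) * ENNReal.ofReal (|p.1 - p.2| ^ (β - 1)))
        + ∫⁻ p in Icc (-R) R ×ˢ Icc (-R) R,
          ENNReal.ofReal (1 / (1 + p.2 ^ 2)) * ENNReal.ofReal (|p.1 - p.2| ^ (β - 1)) := by
        simp_rw [hsplit]
        exact lintegral_add_left (by fun_prop) _
    _ ≤ ENNReal.ofReal π * K + ENNReal.ofReal π * K := add_le_add T1 T2
    _ = ENNReal.ofReal (4 * π * 4 ^ β / β * a ^ (β / α)) := by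
        rw [hK, ← ENNReal.ofReal_mul hπ.le, ← ENNReal.ofReal_add (by positivity) (by positivity),
          ← two_mul, hrhs]
end

section
/- Let 1 ≤ β < 2 and set α = (2−β)/2. There is a constant C such that for all sufficiently large b > 0, ∬_{max(|τ|, r) > b^{1/α}, r > 0} [1/(1 + (τ+r)²/4) + 1/(1 + (τ−r)²/4)] · r^{β−1}/(1+r²) dτ dr ≤ C b^{−2}. -/
/-!
Write the integrand as `(K (τ + r) + K (τ - r)) * w r` with `K x = 1 / (1 + x² / 4)`, whose
integral over `ℝ` is `2π`, and `w r = r ^ (β - 1) / (1 + r²) ≤ r ^ (β - 3)`, integrable on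
`(0, ∞)`. With `R = b ^ (1 / α)` the region is covered by `{r > R}` and `{|τ| > R}`.
On `{r > R}`, integrating first in `τ` leaves `∫_{r > R} 4π r ^ (β - 3) ≍ R ^ (β - 2)`.
For `|τ| ≥ 1` the `r`-integral is `O(|τ| ^ (β - 3))`: for `r ≤ |τ| / 2` both kernels are
`O(τ⁻²)` (and `τ⁻² ≤ |τ| ^ (β - 3)` as `β ≥ 1`), while for `r > |τ| / 2` the weight is
`O(|τ| ^ (β - 3))` and the kernels integrate to `4π`. Integrating over `{|τ| > R}` again gives
`O(R ^ (β - 2))`, and `R ^ (β - 2) = b ^ (-2)`.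
-/

open MeasureTheory Real Set
open scoped ENNReal

noncomputable def cauchyKernel (x : ℝ) : ℝ := 1 / (1 + x ^ 2 / 4)

noncomputable def pairKernel (τ r : ℝ) : ℝ := cauchyKernel (τ + r) + cauchyKernel (τ - r)

noncomputable def radialWeight (β r : ℝ) : ℝ := r ^ (β - 1) / (1 + r ^ 2)

noncomputable def radialMass (β : ℝ) : ℝ := ∫ r in Ioi 0, radialWeight β r

lemma cauchyKernel_nonneg (x : ℝ) : 0 ≤ cauchyKernel x := by
  unfold cauchyKernel; positivity

lemma cauchyKernel_eq (x : ℝ) : cauchyKernel x = (1 + (x / 2) ^ 2)⁻¹ := by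
  rw [cauchyKernel, one_div, div_pow]; norm_num

lemma integrable_cauchyKernel : Integrable cauchyKernel := by
  rw [show cauchyKernel = _ from funext cauchyKernel_eq]
  exact integrable_inv_one_add_sq.comp_div two_ne_zero

lemma integral_cauchyKernel : ∫ x, cauchyKernel x = 2 * π := by
  simp only [cauchyKernel_eq, Measure.integral_comp_div (fun x : ℝ => (1 + x ^ 2)⁻¹),
    integral_univ_inv_one_add_sq, abs_two, smul_eq_mul]

lemma lintegral_cauchyKernel_add (a : ℝ) :
    ∫⁻ x, ENNReal.ofReal (cauchyKernel (x + a)) = ENNReal.ofReal (2 * π) := by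
  rw [lintegral_add_right_eq_self (fun x => ENNReal.ofReal (cauchyKernel x)),
    ← integral_cauchyKernel, ofReal_integral_eq_lintegral_ofReal integrable_cauchyKernel
      (Filter.Eventually.of_forall cauchyKernel_nonneg)]

lemma cauchyKernel_le_of_le_abs {s x : ℝ} (hs : 0 < s) (h : s ≤ |x|) :
    cauchyKernel x ≤ 4 / s ^ 2 := by
  have : s ^ 2 ≤ x ^ 2 := by simpa only [sq_abs] using pow_le_pow_left₀ hs.le h 2
  rw [cauchyKernel, div_le_div_iff₀ (by positivity) (by positivity)]
  linarith

lemma pairKernel_nonneg (τ r : ℝ) : 0 ≤ pairKernel τ r :=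
  add_nonneg (cauchyKernel_nonneg _) (cauchyKernel_nonneg _)

lemma pairKernel_comm (τ r : ℝ) : pairKernel τ r = pairKernel r τ := by
  simp only [pairKernel, cauchyKernel, add_comm τ r, ← neg_sub r τ, neg_sq]

lemma lintegral_pairKernel (r : ℝ) :
    ∫⁻ τ, ENNReal.ofReal (pairKernel τ r) = ENNReal.ofReal (4 * π) := by
  simp only [pairKernel, sub_eq_add_neg]
  rw [lintegral_congr fun τ => ENNReal.ofReal_add (cauchyKernel_nonneg _) (cauchyKernel_nonneg _),
    lintegral_add_left (by unfold cauchyKernel; fun_prop), lintegral_cauchyKernel_add,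
    lintegral_cauchyKernel_add, ← ENNReal.ofReal_add (by positivity) (by positivity)]
  ring_nf

lemma pairKernel_le_of_le_half {τ r : ℝ} (hτ : τ ≠ 0) (hr₀ : 0 ≤ r) (hr : r ≤ |τ| / 2) :
    pairKernel τ r ≤ 32 / τ ^ 2 := by
  have hs : 0 < |τ| / 2 := by positivity
  have key : ∀ x, |τ| / 2 ≤ |x| → cauchyKernel x ≤ 16 / τ ^ 2 := fun x hx => by
    convert cauchyKernel_le_of_le_abs hs hx using 1
    rw [div_pow, sq_abs]; field_simp; norm_num
  have h₁ : |τ| / 2 ≤ |τ + r| := by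
    have := abs_sub_abs_le_abs_sub τ (-r); rw [sub_neg_eq_add, abs_neg, abs_of_nonneg hr₀] at this
    linarith
  have h₂ : |τ| / 2 ≤ |τ - r| := by
    have := abs_sub_abs_le_abs_sub τ r; rw [abs_of_nonneg hr₀] at this
    linarith
  calc pairKernel τ r ≤ 16 / τ ^ 2 + 16 / τ ^ 2 := add_le_add (key _ h₁) (key _ h₂)
    _ = 32 / τ ^ 2 := by ring

lemma radialWeight_nonneg (β : ℝ) {r : ℝ} (hr : 0 ≤ r) : 0 ≤ radialWeight β r := by
  unfold radialWeight; positivity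

lemma radialWeight_le_rpow_sub_three (β : ℝ) {r : ℝ} (hr : 0 < r) :
    radialWeight β r ≤ r ^ (β - 3) := by
  calc radialWeight β r ≤ r ^ (β - 1) / r ^ (2 : ℝ) := by
        rw [radialWeight, rpow_two]
        gcongr
        linarith
    _ = r ^ (β - 3) := by rw [← rpow_sub hr]; ring_nf

lemma radialWeight_le_rpow_sub_one (β : ℝ) {r : ℝ} (hr : 0 ≤ r) :
    radialWeight β r ≤ r ^ (β - 1) :=
  div_le_self (rpow_nonneg hr _) (by nlinarith)

lemma integrableOn_radialWeight {β : ℝ} (h₀ : 0 < β) (h₂ : β < 2) :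
    IntegrableOn (radialWeight β) (Ioi 0) := by
  have hmeas : Measurable (radialWeight β) := by unfold radialWeight; fun_prop
  rw [← Ioc_union_Ioi_eq_Ioi zero_le_one]
  refine IntegrableOn.union ?_ ?_
  · have hint : IntegrableOn (fun r : ℝ => r ^ (β - 1)) (Ioc 0 1) := by
      rw [← intervalIntegrable_iff_integrableOn_Ioc_of_le zero_le_one]
      exact intervalIntegral.intervalIntegrable_rpow' (by linarith)
    refine hint.mono' hmeas.aestronglyMeasurable ((ae_restrict_iff' measurableSet_Ioc).2 ?_)
    refine Filter.Eventually.of_forall fun r hr => ?_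
    rw [Real.norm_of_nonneg (radialWeight_nonneg β hr.1.le)]
    exact radialWeight_le_rpow_sub_one β hr.1.le
  · refine (integrableOn_Ioi_rpow_of_lt (by linarith : β - 3 < -1) zero_lt_one).mono'
      hmeas.aestronglyMeasurable ((ae_restrict_iff' measurableSet_Ioi).2 ?_)
    refine Filter.Eventually.of_forall fun r hr => ?_
    have hr₀ : (0 : ℝ) < r := zero_lt_one.trans hr
    rw [Real.norm_of_nonneg (radialWeight_nonneg β hr₀.le)]
    exact radialWeight_le_rpow_sub_three β hr₀

lemma radialMass_nonneg (β : ℝ) : 0 ≤ radialMass β :=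
  setIntegral_nonneg measurableSet_Ioi fun _ hr => radialWeight_nonneg β (le_of_lt hr)

lemma lintegral_Ioi_rpow {p R : ℝ} (hp : p < -1) (hR : 0 < R) :
    ∫⁻ r in Ioi R, ENNReal.ofReal (r ^ p) = ENNReal.ofReal (-R ^ (p + 1) / (p + 1)) := by
  rw [← integral_Ioi_rpow_of_lt hp hR,
    ofReal_integral_eq_lintegral_ofReal (integrableOn_Ioi_rpow_of_lt hp hR)]
  filter_upwards [ae_restrict_mem measurableSet_Ioi] with r hr
  exact rpow_nonneg (hR.trans hr).le _

lemma lintegral_abs_rpow_of_lt_abs {p R : ℝ} (hp : p < -1) (hR : 0 < R) :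
    ∫⁻ x in {x : ℝ | R < |x|}, ENNReal.ofReal (|x| ^ p) =
      2 * ENNReal.ofReal (-R ^ (p + 1) / (p + 1)) := by
  have hset : {x : ℝ | R < |x|} = Iio (-R) ∪ Ioi R := by
    ext x; simp only [mem_ofPred_eq, lt_abs, mem_union, mem_Iio, mem_Ioi, lt_neg]; tauto
  have hIoi : ∫⁻ x in Ioi R, ENNReal.ofReal (|x| ^ p) =
      ENNReal.ofReal (-R ^ (p + 1) / (p + 1)) := by
    rw [← lintegral_Ioi_rpow hp hR]
    refine setLIntegral_congr_fun measurableSet_Ioi fun x hx => ?_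
    rw [abs_of_pos (hR.trans hx)]
  have hIio : ∫⁻ x in Iio (-R), ENNReal.ofReal (|x| ^ p) =
      ∫⁻ x in Ioi R, ENNReal.ofReal (|x| ^ p) := by
    nth_rw 1 [← Measure.map_neg_eq_self (volume : Measure ℝ)]
    rw [Measure.restrict_map measurable_neg measurableSet_Iio,
      lintegral_map (by fun_prop) measurable_neg, neg_preimage, neg_Iio, neg_neg]
    simp only [abs_neg]
  have hdisj : Disjoint (Iio (-R)) (Ioi R) :=
    (Iic_disjoint_Ioi (by linarith)).mono_left Iio_subset_Iic_self
  rw [hset, lintegral_union measurableSet_Ioi hdisj, hIio, hIoi, two_mul]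

lemma lintegral_pairKernel_mul_radialWeight (β r : ℝ) :
    ∫⁻ τ, ENNReal.ofReal (pairKernel τ r * radialWeight β r) =
      ENNReal.ofReal (4 * π * radialWeight β r) := by
  simp only [ENNReal.ofReal_mul (pairKernel_nonneg _ _)]
  rw [lintegral_mul_const' _ _ ENNReal.ofReal_ne_top, lintegral_pairKernel,
    ← ENNReal.ofReal_mul (by positivity)]

lemma pairKernel_mul_radialWeight_le {β τ r : ℝ} (h₂ : β < 2) (hτ : τ ≠ 0) (hr : 0 < r) :
    pairKernel τ r * radialWeight β r ≤
      32 / τ ^ 2 * radialWeight β r + (|τ| / 2) ^ (β - 3) * pairKernel τ r := by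
  have hw := radialWeight_nonneg β hr.le
  have hK := pairKernel_nonneg τ r
  rcases le_or_gt r (|τ| / 2) with hnear | hfar
  · have := mul_le_mul_of_nonneg_right (pairKernel_le_of_le_half hτ hr.le hnear) hw
    nlinarith [rpow_nonneg (by positivity : 0 ≤ |τ| / 2) (β - 3)]
  · have hw' : radialWeight β r ≤ (|τ| / 2) ^ (β - 3) :=
      (radialWeight_le_rpow_sub_three β hr).trans
        (rpow_le_rpow_of_nonpos (by positivity) hfar.le (by linarith))
    have : 0 ≤ 32 / τ ^ 2 * radialWeight β r := by positivity
    calc pairKernel τ r * radialWeight β r ≤ pairKernel τ r * (|τ| / 2) ^ (β - 3) :=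
          mul_le_mul_of_nonneg_left hw' hK
      _ ≤ _ := by linarith [mul_comm (pairKernel τ r) ((|τ| / 2) ^ (β - 3))]

lemma lintegral_Ioi_pairKernel_mul_radialWeight_le {β τ : ℝ} (h₀ : 0 < β) (h₂ : β < 2)
    (hτ : τ ≠ 0) :
    ∫⁻ r in Ioi 0, ENNReal.ofReal (pairKernel τ r * radialWeight β r) ≤
      ENNReal.ofReal (32 / τ ^ 2 * radialMass β + (|τ| / 2) ^ (β - 3) * (4 * π)) := by
  have hW : ∫⁻ r in Ioi 0, ENNReal.ofReal (radialWeight β r) = ENNReal.ofReal (radialMass β) :=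
    (ofReal_integral_eq_lintegral_ofReal (integrableOn_radialWeight h₀ h₂)
      ((ae_restrict_iff' measurableSet_Ioi).2
        (Filter.Eventually.of_forall fun r hr => radialWeight_nonneg β (le_of_lt hr)))).symm
  have hK : ∫⁻ r in Ioi 0, ENNReal.ofReal (pairKernel τ r) ≤ ENNReal.ofReal (4 * π) := by
    calc ∫⁻ r in Ioi 0, ENNReal.ofReal (pairKernel τ r)
        ≤ ∫⁻ r, ENNReal.ofReal (pairKernel r τ) := by
          simp only [pairKernel_comm τ]; exact setLIntegral_le_lintegral _ _
      _ = ENNReal.ofReal (4 * π) := lintegral_pairKernel τ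
  have hc : 0 ≤ (|τ| / 2) ^ (β - 3) := by positivity
  calc ∫⁻ r in Ioi 0, ENNReal.ofReal (pairKernel τ r * radialWeight β r)
      ≤ ∫⁻ r in Ioi 0, (ENNReal.ofReal (32 / τ ^ 2) * ENNReal.ofReal (radialWeight β r) +
          ENNReal.ofReal ((|τ| / 2) ^ (β - 3)) * ENNReal.ofReal (pairKernel τ r)) := by
        refine setLIntegral_mono' measurableSet_Ioi fun r hr => ?_
        rw [← ENNReal.ofReal_mul (by positivity), ← ENNReal.ofReal_mul hc,
          ← ENNReal.ofReal_add (mul_nonneg (by positivity) (radialWeight_nonneg β (le_of_lt hr)))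
            (mul_nonneg hc (pairKernel_nonneg τ r))]
        exact ENNReal.ofReal_le_ofReal (pairKernel_mul_radialWeight_le h₂ hτ hr)
    _ = ENNReal.ofReal (32 / τ ^ 2) * (∫⁻ r in Ioi 0, ENNReal.ofReal (radialWeight β r)) +
          ENNReal.ofReal ((|τ| / 2) ^ (β - 3)) *
            ∫⁻ r in Ioi 0, ENNReal.ofReal (pairKernel τ r) := by
        rw [lintegral_add_left (by unfold radialWeight; fun_prop),
          lintegral_const_mul' _ _ ENNReal.ofReal_ne_top,
          lintegral_const_mul' _ _ ENNReal.ofReal_ne_top]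
    _ ≤ ENNReal.ofReal (32 / τ ^ 2) * ENNReal.ofReal (radialMass β) +
          ENNReal.ofReal ((|τ| / 2) ^ (β - 3)) * ENNReal.ofReal (4 * π) := by
        rw [hW]; gcongr
    _ = _ := by
        have h₁ : (0 : ℝ) ≤ 32 / τ ^ 2 := by positivity
        rw [ENNReal.ofReal_add (mul_nonneg h₁ (radialMass_nonneg β)) (by positivity),
          ENNReal.ofReal_mul h₁, ENNReal.ofReal_mul hc]

noncomputable def widthConstant (β : ℝ) : ℝ := 32 * radialMass β + 4 * π / 2 ^ (β - 3)

lemma widthConstant_nonneg (β : ℝ) : 0 ≤ widthConstant β := by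
  have := radialMass_nonneg β
  unfold widthConstant; positivity

lemma lintegral_Ioi_pairKernel_mul_radialWeight_le_rpow {β τ : ℝ} (h₁ : 1 ≤ β) (h₂ : β < 2)
    (hτ : 1 ≤ |τ|) :
    ∫⁻ r in Ioi 0, ENNReal.ofReal (pairKernel τ r * radialWeight β r) ≤
      ENNReal.ofReal (widthConstant β * |τ| ^ (β - 3)) := by
  have hτ₀ : τ ≠ 0 := abs_pos.1 (zero_lt_one.trans_le hτ)
  refine (lintegral_Ioi_pairKernel_mul_radialWeight_le (by linarith) h₂ hτ₀).trans
    (ENNReal.ofReal_le_ofReal ?_)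
  have hsq : 1 / τ ^ 2 ≤ |τ| ^ (β - 3) := by
    calc 1 / τ ^ 2 = |τ| ^ (-2 : ℝ) := by rw [rpow_neg (abs_nonneg τ), rpow_two, sq_abs, one_div]
      _ ≤ |τ| ^ (β - 3) := rpow_le_rpow_of_exponent_le hτ (by linarith)
  have hM := radialMass_nonneg β
  rw [div_rpow (abs_nonneg τ) zero_le_two, widthConstant]
  calc 32 / τ ^ 2 * radialMass β + |τ| ^ (β - 3) / 2 ^ (β - 3) * (4 * π)
      = 32 * radialMass β * (1 / τ ^ 2) + 4 * π / 2 ^ (β - 3) * |τ| ^ (β - 3) := by ring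
    _ ≤ 32 * radialMass β * |τ| ^ (β - 3) + 4 * π / 2 ^ (β - 3) * |τ| ^ (β - 3) := by gcongr
    _ = _ := by ring

lemma measurable_pairKernel_mul_radialWeight (β : ℝ) :
    Measurable fun p : ℝ × ℝ => pairKernel p.1 p.2 * radialWeight β p.2 := by
  unfold pairKernel cauchyKernel radialWeight; fun_prop

lemma lintegral_univ_prod_Ioi_le {β R : ℝ} (h₂ : β < 2) (hR : 0 < R) :
    ∫⁻ p in (univ : Set ℝ) ×ˢ Ioi R, ENNReal.ofReal (pairKernel p.1 p.2 * radialWeight β p.2) ≤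
      ENNReal.ofReal (4 * π / (2 - β) * R ^ (β - 2)) := by
  rw [Measure.volume_eq_prod, ← Measure.prod_restrict,
    lintegral_prod_symm' _ (measurable_pairKernel_mul_radialWeight β).ennreal_ofReal,
    Measure.restrict_univ]
  simp only [lintegral_pairKernel_mul_radialWeight]
  calc ∫⁻ r in Ioi R, ENNReal.ofReal (4 * π * radialWeight β r)
      ≤ ∫⁻ r in Ioi R, ENNReal.ofReal (4 * π) * ENNReal.ofReal (r ^ (β - 3)) := by
        refine setLIntegral_mono' measurableSet_Ioi fun r hr => ?_
        rw [← ENNReal.ofReal_mul (by positivity)]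
        gcongr
        exact radialWeight_le_rpow_sub_three β (hR.trans hr)
    _ = ENNReal.ofReal (4 * π) * ENNReal.ofReal (-R ^ (β - 3 + 1) / (β - 3 + 1)) := by
        rw [lintegral_const_mul' _ _ ENNReal.ofReal_ne_top, lintegral_Ioi_rpow (by linarith) hR]
    _ = _ := by
        have : 2 - β ≠ 0 := by linarith
        rw [← ENNReal.ofReal_mul (by positivity), show β - 3 + 1 = -(2 - β) by ring]
        congr 1
        field_simp
        ring_nf

lemma lintegral_abs_gt_prod_Ioi_le {β R : ℝ} (h₁ : 1 ≤ β) (h₂ : β < 2) (hR : 1 ≤ R) :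
    ∫⁻ p in {τ : ℝ | R < |τ|} ×ˢ Ioi 0,
        ENNReal.ofReal (pairKernel p.1 p.2 * radialWeight β p.2) ≤
      ENNReal.ofReal (2 * widthConstant β / (2 - β) * R ^ (β - 2)) := by
  have hR₀ : 0 < R := zero_lt_one.trans_le hR
  have hC := widthConstant_nonneg β
  rw [Measure.volume_eq_prod, ← Measure.prod_restrict,
    lintegral_prod _ (measurable_pairKernel_mul_radialWeight β).ennreal_ofReal.aemeasurable]
  calc ∫⁻ τ in {τ : ℝ | R < |τ|}, ∫⁻ r in Ioi 0,
        ENNReal.ofReal (pairKernel τ r * radialWeight β r)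
      ≤ ∫⁻ τ in {τ : ℝ | R < |τ|}, ENNReal.ofReal (widthConstant β) *
          ENNReal.ofReal (|τ| ^ (β - 3)) := by
        refine setLIntegral_mono' (measurableSet_lt measurable_const measurable_abs)
          fun τ hτ => ?_
        rw [← ENNReal.ofReal_mul hC]
        exact lintegral_Ioi_pairKernel_mul_radialWeight_le_rpow h₁ h₂ (hR.trans hτ.le)
    _ = ENNReal.ofReal (widthConstant β) *
          (2 * ENNReal.ofReal (-R ^ (β - 3 + 1) / (β - 3 + 1))) := by
        rw [lintegral_const_mul' _ _ ENNReal.ofReal_ne_top,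
          lintegral_abs_rpow_of_lt_abs (by linarith) hR₀]
    _ = _ := by
        have : 2 - β ≠ 0 := by linarith
        rw [← ENNReal.ofReal_ofNat 2, ← ENNReal.ofReal_mul zero_le_two,
          ← ENNReal.ofReal_mul hC, show β - 3 + 1 = -(2 - β) by ring]
        congr 1
        field_simp
        ring_nf

lemma lintegral_max_gt_le {β R : ℝ} (h₁ : 1 ≤ β) (h₂ : β < 2) (hR : 1 ≤ R) :
    ∫⁻ p in {p : ℝ × ℝ | R < max |p.1| p.2 ∧ 0 < p.2},
        ENNReal.ofReal (pairKernel p.1 p.2 * radialWeight β p.2) ≤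
      ENNReal.ofReal ((4 * π + 2 * widthConstant β) / (2 - β) * R ^ (β - 2)) := by
  have hcover : {p : ℝ × ℝ | R < max |p.1| p.2 ∧ 0 < p.2} ⊆
      (univ : Set ℝ) ×ˢ Ioi R ∪ {τ : ℝ | R < |τ|} ×ˢ Ioi 0 := by
    rintro ⟨τ, r⟩ ⟨hmax, hr⟩
    rcases lt_max_iff.1 hmax with hτ | hr'
    · exact Or.inr ⟨hτ, hr⟩
    · exact Or.inl ⟨mem_univ τ, hr'⟩
  have hR₀ : 0 < R := zero_lt_one.trans_le hR
  have h2β : 0 < 2 - β := by linarith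
  have hC := widthConstant_nonneg β
  calc _ ≤ _ := lintegral_mono_set hcover
    _ ≤ _ := lintegral_union_le _ _ _
    _ ≤ ENNReal.ofReal (4 * π / (2 - β) * R ^ (β - 2)) +
          ENNReal.ofReal (2 * widthConstant β / (2 - β) * R ^ (β - 2)) :=
        add_le_add (lintegral_univ_prod_Ioi_le h₂ hR₀) (lintegral_abs_gt_prod_Ioi_le h₁ h₂ hR)
    _ = _ := by
        rw [← ENNReal.ofReal_add (by positivity) (by positivity)]
        ring_nf

theorem stmt_9 (β : ℝ) (hβ1 : 1 ≤ β) (hβ2 : β < 2) (α : ℝ) (hα : α = (2 - β) / 2) :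
    ∃ C : ℝ, ∃ b₀ > (0 : ℝ), ∀ b ≥ b₀,
      ∫ p in {p : ℝ × ℝ | max |p.1| p.2 > b ^ (1 / α) ∧ 0 < p.2},
        (1 / (1 + (p.1 + p.2) ^ 2 / 4) + 1 / (1 + (p.1 - p.2) ^ 2 / 4)) *
          (p.2 ^ (β - 1) / (1 + p.2 ^ 2)) ≤
      C * b ^ (-2 : ℝ) := by
  have h2β : 0 < 2 - β := by linarith
  refine ⟨(4 * π + 2 * widthConstant β) / (2 - β), 1, one_pos, fun b hb => ?_⟩
  have hR : 1 ≤ b ^ (1 / α) := one_le_rpow hb (by rw [hα]; positivity)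
  have hRb : (b ^ (1 / α)) ^ (β - 2) = b ^ (-2 : ℝ) := by
    rw [← rpow_mul (by linarith), hα]
    congr 1
    field_simp
    ring
  have hS : MeasurableSet {p : ℝ × ℝ | max |p.1| p.2 > b ^ (1 / α) ∧ 0 < p.2} :=
    (measurableSet_lt measurable_const (measurable_fst.abs.max measurable_snd)).inter
      (measurableSet_lt measurable_const measurable_snd)
  have hnonneg : ∀ p ∈ {p : ℝ × ℝ | max |p.1| p.2 > b ^ (1 / α) ∧ 0 < p.2},
      0 ≤ pairKernel p.1 p.2 * radialWeight β p.2 := fun p hp =>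
    mul_nonneg (pairKernel_nonneg _ _) (radialWeight_nonneg β hp.2.le)
  have hintegrand : (fun p : ℝ × ℝ =>
      (1 / (1 + (p.1 + p.2) ^ 2 / 4) + 1 / (1 + (p.1 - p.2) ^ 2 / 4)) *
        (p.2 ^ (β - 1) / (1 + p.2 ^ 2))) = fun p => pairKernel p.1 p.2 * radialWeight β p.2 :=
    rfl
  rw [hintegrand, integral_eq_lintegral_of_nonneg_ae ((ae_restrict_iff' hS).2 (.of_forall hnonneg))
    (measurable_pairKernel_mul_radialWeight β).aestronglyMeasurable, ← hRb]
  have hC := widthConstant_nonneg β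
  exact ENNReal.toReal_le_of_le_ofReal (by positivity) (lintegral_max_gt_le hβ1 hβ2 hR)
end

section
/- Let k ≥ 1 and 0 < β < 2 with β ≤ k. Set α₁ = (2−β)/4 and α₂ = (2−β)/2. There is a constant c such that for all b > 0, ∬_{A₁} |ξ|^{β−k}/(|ξ|⁴ + τ²) dτ dξ ≤ c b^{−2}, where A₁ = {(τ,ξ) ∈ ℝ × ℝ^k : |τ|^{α₁} ≥ |ξ|^{α₂} and |τ|^{α₁} > b}. -/
/-!
On the region, `|τ| > T := b ^ (4 / (2 - β))` and `|ξ| ≤ √|τ|`. Bounding the denominator below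
by `τ²` and scaling the ball of radius `√|τ|` to the unit ball, the `ξ`-integral is at most
`|τ| ^ (β / 2 - 2) * J` with `J = ∫_{|ξ| ≤ 1} |ξ| ^ (β - k)`, which is finite because `β > 0`.
Since `β < 2`, the remaining integral over `|τ| > T` equals `4 T ^ (β / 2 - 1) / (2 - β)`,
and `T ^ (β / 2 - 1) = b⁻²`.
-/

open MeasureTheory Set Metric

theorem lintegral_comp_abs (f : ℝ → ENNReal) : ∫⁻ x, f |x| = 2 * ∫⁻ x in Ioi 0, f x := by
  have h_pos : ∫⁻ x in Ioi 0, f |x| = ∫⁻ x in Ioi 0, f x :=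
    setLIntegral_congr_fun measurableSet_Ioi fun x hx => by rw [abs_of_pos hx]
  have h_neg : ∫⁻ x in Iic 0, f |x| = ∫⁻ x in Ioi 0, f |x| := by
    rw [← lintegral_indicator measurableSet_Iic, ← lintegral_neg_eq_self,
      Measure.restrict_congr_set Ioi_ae_eq_Ici, ← lintegral_indicator measurableSet_Ici]
    congr 1
    ext x
    simp [indicator_apply, abs_neg]
  rw [← lintegral_add_compl _ measurableSet_Iic, compl_Iic, h_neg, h_pos, two_mul]

theorem lintegral_Ioi_rpow_of_lt {a : ℝ} (ha : a < -1) {T : ℝ} (hT : 0 < T) :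
    ∫⁻ y in Ioi T, ENNReal.ofReal (y ^ a) = ENNReal.ofReal (-T ^ (a + 1) / (a + 1)) := by
  rw [← integral_Ioi_rpow_of_lt ha hT, ofReal_integral_eq_lintegral_ofReal
    (integrableOn_Ioi_rpow_of_lt ha hT)]
  filter_upwards [ae_restrict_mem measurableSet_Ioi] with y hy
  exact Real.rpow_nonneg (hT.trans hy).le a

def parabolicRegion (E : Type*) [Norm E] (T : ℝ) : Set (ℝ × E) :=
  {p | T < |p.1| ∧ ‖p.2‖ ^ 2 ≤ |p.1|}

theorem setOf_rpow_subset_parabolicRegion {E : Type*} [NormedAddCommGroup E] {α b : ℝ}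
    (hα : 0 < α) (hb : 0 ≤ b) :
    {p : ℝ × E | |p.1| ^ α ≥ ‖p.2‖ ^ (2 * α) ∧ |p.1| ^ α > b} ⊆ parabolicRegion E (b ^ α⁻¹) := by
  rintro ⟨τ, ξ⟩ ⟨hξ, hτ⟩
  refine ⟨(Real.rpow_inv_lt_iff_of_pos hb (abs_nonneg τ) hα).2 hτ, ?_⟩
  rwa [← Real.rpow_le_rpow_iff (by positivity) (abs_nonneg τ) hα,
    ← Real.rpow_natCast_mul (norm_nonneg _), Nat.cast_ofNat]

section HaarMeasure

variable {E : Type*} [NormedAddCommGroup E] [NormedSpace ℝ E] [FiniteDimensional ℝ E]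
  [MeasurableSpace E] [BorelSpace E] (μ : Measure E) [μ.IsAddHaarMeasure]

local notation "d" => (Module.finrank ℝ E : ℝ)

theorem integrableOn_closedBall_norm_rpow (hd : 1 ≤ Module.finrank ℝ E) {s : ℝ}
    (hs : -d < s) (R : ℝ) :
    IntegrableOn (fun x : E => ‖x‖ ^ s) (closedBall 0 R) μ := by
  refine (integrableOn_ball_of_norm_le_rpow hd (C := 1) (α := -s) (r := R + 1) (by linarith)
    (ae_of_all _ fun x => ?_) (measurable_norm.pow_const s).aestronglyMeasurable).mono_set
    (closedBall_subset_ball (by linarith))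
  rw [neg_neg, one_mul, Real.norm_of_nonneg (by positivity)]

theorem setIntegral_closedBall_norm_rpow (s : ℝ) {R : ℝ} (hR : 0 < R) :
    ∫ x in closedBall (0 : E) R, ‖x‖ ^ s ∂μ =
      R ^ (d + s) * ∫ x in closedBall (0 : E) 1, ‖x‖ ^ s ∂μ := by
  have h := Measure.setIntegral_comp_smul_of_pos μ (fun x : E => ‖x‖ ^ s) (closedBall 0 1) hR
  simp only [norm_smul, Real.norm_of_nonneg hR.le, Real.mul_rpow hR.le (norm_nonneg _),
    integral_const_mul, smul_closedBall R (0 : E) zero_le_one, smul_zero, mul_one,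
    smul_eq_mul] at h
  rw [Real.rpow_add hR, Real.rpow_natCast, mul_assoc, h, mul_inv_cancel_left₀ (by positivity)]

theorem lintegral_closedBall_norm_rpow (hd : 1 ≤ Module.finrank ℝ E) {s : ℝ}
    (hs : -d < s) {R : ℝ} (hR : 0 < R) :
    ∫⁻ x in closedBall (0 : E) R, ENNReal.ofReal (‖x‖ ^ s) ∂μ =
      ENNReal.ofReal (R ^ (d + s) * ∫ x in closedBall (0 : E) 1, ‖x‖ ^ s ∂μ) := by
  rw [← setIntegral_closedBall_norm_rpow μ s hR, ofReal_integral_eq_lintegral_ofReal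
    (integrableOn_closedBall_norm_rpow μ hd hs R) (ae_of_all _ fun x => by positivity)]

theorem lintegral_closedBall_sqrt_norm_rpow_div_le (hd : 1 ≤ Module.finrank ℝ E) {s : ℝ}
    (hs : -d < s) {τ : ℝ} (hτ : τ ≠ 0) :
    ∫⁻ ξ in closedBall (0 : E) √|τ|, ENNReal.ofReal (‖ξ‖ ^ s / (‖ξ‖ ^ 4 + τ ^ 2)) ∂μ ≤
      ENNReal.ofReal (|τ| ^ ((d + s) / 2 - 2)) *
        ENNReal.ofReal (∫ x in closedBall (0 : E) 1, ‖x‖ ^ s ∂μ) := by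
  have hτ0 : 0 < |τ| := abs_pos.2 hτ
  calc _ ≤ ∫⁻ ξ in closedBall (0 : E) √|τ|,
        ENNReal.ofReal (‖ξ‖ ^ s) * ENNReal.ofReal (|τ| ^ (-2 : ℝ)) ∂μ := by
        refine lintegral_mono fun ξ => ?_
        rw [← ENNReal.ofReal_mul (by positivity), Real.rpow_neg hτ0.le, Real.rpow_two, sq_abs,
          ← div_eq_mul_inv]
        gcongr
        exact le_add_of_nonneg_left (by positivity)
    _ = ENNReal.ofReal (√|τ| ^ (d + s) * ∫ x in closedBall (0 : E) 1, ‖x‖ ^ s ∂μ) *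
          ENNReal.ofReal (|τ| ^ (-2 : ℝ)) := by
        rw [lintegral_mul_const' _ _ ENNReal.ofReal_ne_top,
          lintegral_closedBall_norm_rpow μ hd hs (Real.sqrt_pos.2 hτ0)]
    _ = _ := by
        rw [← ENNReal.ofReal_mul' (by positivity), ← ENNReal.ofReal_mul (by positivity),
          mul_right_comm, Real.sqrt_eq_rpow, ← Real.rpow_mul hτ0.le, ← Real.rpow_add hτ0]
        ring_nf

theorem lintegral_parabolicRegion_le (hd : 1 ≤ Module.finrank ℝ E) {s : ℝ} (hs : -d < s)
    (hsd : d + s < 2) {T : ℝ} (hT : 0 < T) :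
    ∫⁻ p in parabolicRegion E T,
        ENNReal.ofReal (‖p.2‖ ^ s / (‖p.2‖ ^ 4 + p.1 ^ 2)) ∂(volume.prod μ) ≤
      ENNReal.ofReal (4 / (2 - (d + s)) * T ^ ((d + s) / 2 - 1) *
        ∫ x in closedBall (0 : E) 1, ‖x‖ ^ s ∂μ) := by
  set B := parabolicRegion E T
  set F := fun p : ℝ × E => ENNReal.ofReal (‖p.2‖ ^ s / (‖p.2‖ ^ 4 + p.1 ^ 2))
  set J := ∫ x in closedBall (0 : E) 1, ‖x‖ ^ s ∂μ
  have hB : MeasurableSet B :=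
    (measurableSet_lt measurable_const (by fun_prop : Measurable fun p : ℝ × E => |p.1|)).inter
      (measurableSet_le (by fun_prop : Measurable fun p : ℝ × E => ‖p.2‖ ^ 2) (by fun_prop))
  have hslice : ∀ τ, ∫⁻ ξ, B.indicator F (τ, ξ) ∂μ ≤
      (Ioi T).indicator (fun y => ENNReal.ofReal (y ^ ((d + s) / 2 - 2))) |τ| *
        ENNReal.ofReal J := by
    intro τ
    by_cases hτ : T < |τ|
    · have hB_slice : (fun ξ => B.indicator F (τ, ξ)) =
          (closedBall 0 √|τ|).indicator (fun ξ => F (τ, ξ)) := by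
        ext ξ
        simp only [B, parabolicRegion, indicator, mem_ofPred_eq, hτ, true_and,
          mem_closedBall_zero_iff, Real.le_sqrt (norm_nonneg ξ) (abs_nonneg τ)]
      rw [hB_slice, lintegral_indicator measurableSet_closedBall, indicator_of_mem (mem_Ioi.2 hτ)]
      exact lintegral_closedBall_sqrt_norm_rpow_div_le μ hd hs (abs_pos.1 (hT.trans hτ))
    · have h_zero : ∀ ξ, B.indicator F (τ, ξ) = 0 := fun ξ => indicator_of_notMem (hτ ·.1) _
      simp [h_zero]
  calc ∫⁻ p in B, F p ∂(volume.prod μ)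
      = ∫⁻ τ, ∫⁻ ξ, B.indicator F (τ, ξ) ∂μ := by
        rw [← lintegral_indicator hB, lintegral_prod _ ((Measurable.indicator (by fun_prop)
          hB).aemeasurable)]
    _ ≤ ∫⁻ τ, (Ioi T).indicator (fun y => ENNReal.ofReal (y ^ ((d + s) / 2 - 2))) |τ| *
          ENNReal.ofReal J := lintegral_mono hslice
    _ = 2 * ENNReal.ofReal (-T ^ ((d + s) / 2 - 2 + 1) / ((d + s) / 2 - 2 + 1)) *
          ENNReal.ofReal J := by
        rw [lintegral_mul_const' _ _ ENNReal.ofReal_ne_top, lintegral_comp_abs,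
          setLIntegral_indicator measurableSet_Ioi, inter_eq_left.2 (Ioi_subset_Ioi hT.le),
          lintegral_Ioi_rpow_of_lt (by linarith) hT]
    _ = _ := by
        have h2 : (d + s) / 2 - 2 + 1 < 0 := by linarith
        rw [← ENNReal.ofReal_ofNat, ← ENNReal.ofReal_mul zero_le_two, ← ENNReal.ofReal_mul
          (mul_nonneg zero_le_two (div_nonneg_of_nonpos (neg_nonpos.2 (by positivity)) h2.le))]
        congr 1
        rw [show (d + s) / 2 - 2 + 1 = -((2 - (d + s)) / 2) by ring, neg_div_neg_eq]
        field_simp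
        ring_nf

end HaarMeasure

theorem stmt_12_general (k : ℕ) (hk : 1 ≤ k) (β : ℝ) (hβ0 : 0 < β) (hβ2 : β < 2) :
    ∃ c : ℝ, ∀ b > (0 : ℝ),
      ∫ p in {p : ℝ × EuclideanSpace ℝ (Fin k) |
          |p.1| ^ ((2 - β) / 4) ≥ ‖p.2‖ ^ ((2 - β) / 2) ∧ |p.1| ^ ((2 - β) / 4) > b},
        ‖p.2‖ ^ (β - (k : ℝ)) / (‖p.2‖ ^ (4 : ℕ) + p.1 ^ 2) ≤
      c * b ^ (-2 : ℝ) := by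
  rw [show (2 - β) / 2 = 2 * ((2 - β) / 4) by ring]
  set J := ∫ x in closedBall (0 : EuclideanSpace ℝ (Fin k)) 1, ‖x‖ ^ (β - k)
  have hJ : 0 ≤ J := setIntegral_nonneg measurableSet_closedBall fun x _ => by positivity
  refine ⟨4 / (2 - β) * J, fun b hb => ?_⟩
  have hα : 0 < (2 - β) / 4 := by linarith
  have key := lintegral_parabolicRegion_le (volume : Measure (EuclideanSpace ℝ (Fin k)))
    (by rwa [finrank_euclideanSpace_fin]) (s := β - k)
    (by rw [finrank_euclideanSpace_fin]; linarith) (by rw [finrank_euclideanSpace_fin]; linarith)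
    (Real.rpow_pos_of_pos hb ((2 - β) / 4)⁻¹)
  simp only [finrank_euclideanSpace_fin, add_sub_cancel] at key
  have hT : (b ^ ((2 - β) / 4)⁻¹) ^ (β / 2 - 1) = b ^ (-2 : ℝ) := by
    have h2β : 2 - β ≠ 0 := by linarith
    rw [← Real.rpow_mul hb.le]
    congr 1
    field_simp
    ring
  rw [integral_eq_lintegral_of_nonneg_ae (ae_of_all _ fun p => by positivity)
    (by fun_prop : Measurable _).aestronglyMeasurable]
  refine ENNReal.toReal_le_of_le_ofReal (by positivity) ?_
  calc _ ≤ _ := lintegral_mono_set (setOf_rpow_subset_parabolicRegion hα hb.le)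
    _ ≤ _ := key
    _ = _ := by rw [hT, mul_right_comm]

theorem stmt_12 (k : ℕ) (hk : 1 ≤ k) (β : ℝ) (hβ0 : 0 < β) (hβ2 : β < 2) (hβk : β ≤ k) :
    ∃ c : ℝ, ∀ b > (0 : ℝ),
      ∫ p in {p : ℝ × EuclideanSpace ℝ (Fin k) |
          |p.1| ^ ((2 - β) / 4) ≥ ‖p.2‖ ^ ((2 - β) / 2) ∧ |p.1| ^ ((2 - β) / 4) > b},
        ‖p.2‖ ^ (β - (k : ℝ)) / (‖p.2‖ ^ (4 : ℕ) + p.1 ^ 2) ≤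
      c * b ^ (-2 : ℝ) :=
  stmt_12_general k hk β hβ0 hβ2
end

section
/- Let k ≥ 1 and 0 < β < 2 with β ≤ k. Set α₁ = (2−β)/4 and α₂ = (2−β)/2. There is a constant c such that for all b > 0, ∬_{A₂} |ξ|^{β−k}/(|ξ|⁴ + τ²) dτ dξ ≤ c b^{−2}, where A₂ = {(τ,ξ) ∈ ℝ × ℝ^k : |τ|^{α₁} < |ξ|^{α₂} and |ξ|^{α₂} > b}. -/
/-!
On the region, `‖ξ‖ ^ ((2 - β) / 2) > b` says `‖ξ‖ > R := b ^ (2 / (2 - β))`; dropping the other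
constraint only enlarges the domain of the nonnegative integrand. For fixed `ξ`,
`∫ dτ / (‖ξ‖⁴ + τ²) = π / ‖ξ‖²`, so by Tonelli the integral is at most
`π ∫_{‖ξ‖ > R} ‖ξ‖ ^ (β - k - 2) dξ`, which in polar coordinates equals
`π k |B₁| R ^ (β - 2) / (2 - β) = π k |B₁| b⁻² / (2 - β)`.
-/

open MeasureTheory Real Set Metric Module

lemma integrable_inv_sq_add_sq {a : ℝ} (ha : a ≠ 0) :
    Integrable fun τ : ℝ => (a ^ 2 + τ ^ 2)⁻¹ := by
  have h := (integrable_inv_one_add_sq.comp_div ha).const_mul (a ^ 2)⁻¹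
  refine h.congr (.of_forall fun τ => ?_)
  field_simp

lemma integral_univ_inv_sq_add_sq {a : ℝ} (ha : a ≠ 0) :
    ∫ τ : ℝ, (a ^ 2 + τ ^ 2)⁻¹ = π / |a| := by
  have h : (fun τ : ℝ => (a ^ 2 + τ ^ 2)⁻¹) = fun τ => (a ^ 2)⁻¹ * (1 + (τ / a) ^ 2)⁻¹ := by
    funext τ; field_simp
  rw [h, integral_const_mul, Measure.integral_comp_div (fun u : ℝ => (1 + u ^ 2)⁻¹),
    integral_univ_inv_one_add_sq, smul_eq_mul, ← sq_abs]
  field_simp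

lemma lintegral_rpow_div_pow_four_add_sq {r : ℝ} (hr : 0 < r) (γ : ℝ) :
    ∫⁻ τ : ℝ, ENNReal.ofReal (r ^ γ / (r ^ 4 + τ ^ 2)) = ENNReal.ofReal (π * r ^ (γ - 2)) := by
  have hr2 : r ^ 2 ≠ 0 := by positivity
  have hf : (fun τ : ℝ => r ^ γ / (r ^ 4 + τ ^ 2)) = fun τ => r ^ γ * ((r ^ 2) ^ 2 + τ ^ 2)⁻¹ := by
    funext τ; ring
  rw [← ofReal_integral_eq_lintegral_ofReal, hf, integral_const_mul,
    integral_univ_inv_sq_add_sq hr2, abs_of_pos (by positivity), rpow_sub hr, rpow_two]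
  · congr 1; ring
  · rw [hf]; exact (integrable_inv_sq_add_sq hr2).const_mul _
  · exact .of_forall fun τ => by positivity

lemma eqOn_pow_smul_indicator_rpow {n : ℕ} (hn : 1 ≤ n) (R s : ℝ) :
    EqOn (fun y : ℝ => y ^ (n - 1) • (Ioi R).indicator (· ^ s) y)
      ((Ioi R).indicator (· ^ (s + n - 1))) (Ioi 0) := by
  intro y (hy : 0 < y)
  by_cases hyR : y ∈ Ioi R
  · simp only [indicator_of_mem hyR, smul_eq_mul]
    rw [← rpow_natCast, ← rpow_add hy, Nat.cast_sub hn]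
    congr 1; ring
  · simp [indicator_of_notMem hyR]

section RadialTail

variable {E : Type*} [NormedAddCommGroup E] [NormedSpace ℝ E] [FiniteDimensional ℝ E]
  [MeasurableSpace E] [BorelSpace E] [Nontrivial E] (μ : Measure E) [μ.IsAddHaarMeasure]
  {R s : ℝ}

lemma integrableOn_norm_rpow_setOf_lt_norm (hs : s + finrank ℝ E < 0) (hR : 0 < R) :
    IntegrableOn (fun x => ‖x‖ ^ s) {x : E | R < ‖x‖} μ := by
  rw [← integrable_indicator_iff (measurableSet_lt measurable_const measurable_norm)]
  change Integrable (fun x => (Ioi R).indicator (· ^ s) ‖x‖) μ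
  rw [integrable_fun_norm_addHaar,
    integrableOn_congr_fun (eqOn_pow_smul_indicator_rpow finrank_pos R s) measurableSet_Ioi,
    integrableOn_indicator_iff measurableSet_Ioi, Ioi_inter_Ioi, max_eq_left hR.le]
  exact integrableOn_Ioi_rpow_of_lt (a := s + finrank ℝ E - 1) (by linarith) hR

lemma setIntegral_norm_rpow_setOf_lt_norm (hs : s + finrank ℝ E < 0) (hR : 0 < R) :
    ∫ x in {x : E | R < ‖x‖}, ‖x‖ ^ s ∂μ
      = finrank ℝ E * μ.real (ball 0 1) * (-R ^ (s + finrank ℝ E) / (s + finrank ℝ E)) := by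
  rw [← integral_indicator (measurableSet_lt measurable_const measurable_norm)]
  change ∫ x, (Ioi R).indicator (· ^ s) ‖x‖ ∂μ = _
  rw [integral_fun_norm_addHaar,
    setIntegral_congr_fun measurableSet_Ioi (eqOn_pow_smul_indicator_rpow finrank_pos R s),
    setIntegral_indicator measurableSet_Ioi, Ioi_inter_Ioi, max_eq_right hR.le,
    integral_Ioi_rpow_of_lt (a := s + finrank ℝ E - 1) (by linarith) hR, nsmul_eq_mul,
    smul_eq_mul, sub_add_cancel, mul_assoc]

lemma lintegral_rpow_div_pow_four_add_sq_of_lt_norm {γ : ℝ} (hγ : γ - 2 + finrank ℝ E < 0)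
    (hR : 0 < R) :
    ∫⁻ p in univ ×ˢ {ξ : E | R < ‖ξ‖}, ENNReal.ofReal (‖p.2‖ ^ γ / (‖p.2‖ ^ 4 + p.1 ^ 2))
        ∂(volume.prod μ)
      = ENNReal.ofReal (π * (finrank ℝ E * μ.real (ball 0 1)
          * (-R ^ (γ - 2 + finrank ℝ E) / (γ - 2 + finrank ℝ E)))) := by
  have hS : MeasurableSet {ξ : E | R < ‖ξ‖} := measurableSet_lt measurable_const measurable_norm
  rw [← Measure.prod_restrict, Measure.restrict_univ,
    lintegral_prod_symm _ (by fun_prop),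
    setLIntegral_congr_fun hS fun ξ hξ => lintegral_rpow_div_pow_four_add_sq (hR.trans hξ) γ,
    ← ofReal_integral_eq_lintegral_ofReal
      ((integrableOn_norm_rpow_setOf_lt_norm μ hγ hR).const_mul π)
      (.of_forall fun _ => by positivity),
    integral_const_mul, setIntegral_norm_rpow_setOf_lt_norm μ hγ hR]

end RadialTail

theorem stmt_13_general (k : ℕ) (hk : 1 ≤ k) (β : ℝ) (hβ2 : β < 2) :
    ∃ c : ℝ, ∀ b > (0 : ℝ),
      ∫ p in {p : ℝ × EuclideanSpace ℝ (Fin k) |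
          |p.1| ^ ((2 - β) / 4) < ‖p.2‖ ^ ((2 - β) / 2) ∧ ‖p.2‖ ^ ((2 - β) / 2) > b},
        ‖p.2‖ ^ (β - (k : ℝ)) / (‖p.2‖ ^ (4 : ℕ) + p.1 ^ 2) ≤
      c * b ^ (-2 : ℝ) := by
  have : Nontrivial (EuclideanSpace ℝ (Fin k)) :=
    Module.nontrivial_of_finrank_pos (R := ℝ) (by rw [finrank_euclideanSpace_fin]; omega)
  have h2β : 0 < 2 - β := by linarith
  refine ⟨π * k * volume.real (ball (0 : EuclideanSpace ℝ (Fin k)) 1) / (2 - β), fun b hb => ?_⟩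
  set A := {p : ℝ × EuclideanSpace ℝ (Fin k) |
    |p.1| ^ ((2 - β) / 4) < ‖p.2‖ ^ ((2 - β) / 2) ∧ ‖p.2‖ ^ ((2 - β) / 2) > b}
  set R := b ^ (2 / (2 - β))
  have hsub : A ⊆ univ ×ˢ {ξ | R < ‖ξ‖} := fun p hp =>
    ⟨trivial, by
      show b ^ (2 / (2 - β)) < ‖p.2‖
      rw [← inv_div, rpow_inv_lt_iff_of_pos hb.le (norm_nonneg _) (by positivity)]
      exact hp.2⟩
  have hRb : R ^ (β - 2) = b ^ (-2 : ℝ) := by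
    rw [← rpow_mul hb.le]; congr 1; field_simp; ring
  rw [integral_eq_lintegral_of_nonneg_ae (.of_forall fun _ => by positivity)
    (by fun_prop : Measurable _).aestronglyMeasurable]
  refine ENNReal.toReal_le_of_le_ofReal (by positivity) ?_
  calc _ ≤ ∫⁻ p in univ ×ˢ {ξ | R < ‖ξ‖}, ENNReal.ofReal (‖p.2‖ ^ (β - k) / (‖p.2‖ ^ 4 + p.1 ^ 2))
        := lintegral_mono_set hsub
    _ = ENNReal.ofReal (π * (k * volume.real (ball (0 : EuclideanSpace ℝ (Fin k)) 1)
          * (-R ^ (β - 2) / (β - 2)))) := by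
      rw [Measure.volume_eq_prod, lintegral_rpow_div_pow_four_add_sq_of_lt_norm volume
        (by rw [finrank_euclideanSpace_fin]; linarith) (rpow_pos_of_pos hb _),
        finrank_euclideanSpace_fin, show β - k - 2 + k = β - 2 by ring]
    _ = _ := by
      rw [hRb, ← neg_sub 2 β, neg_div_neg_eq]
      congr 1; ring

theorem stmt_13 (k : ℕ) (hk : 1 ≤ k) (β : ℝ) (hβ0 : 0 < β) (hβ2 : β < 2) (hβk : β ≤ k) :
    ∃ c : ℝ, ∀ b > (0 : ℝ),
      ∫ p in {p : ℝ × EuclideanSpace ℝ (Fin k) |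
          |p.1| ^ ((2 - β) / 4) < ‖p.2‖ ^ ((2 - β) / 2) ∧ ‖p.2‖ ^ ((2 - β) / 2) > b},
        ‖p.2‖ ^ (β - (k : ℝ)) / (‖p.2‖ ^ (4 : ℕ) + p.1 ^ 2) ≤
      c * b ^ (-2 : ℝ) :=
  stmt_13_general k hk β hβ2
end
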